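/- Let X ∈ ℝ^{n×p} and let C_xx ∈ ℝ^{p×p} be symmetric positive semidefinite with eigenvalues λ₁ ≥ … ≥ λ_p ≥ 0. Let k < min(n,p), let X_{PCA,k} be the rank-k truncated SVD of X, and let E = C_xx − (1/n)XᵀX. If ‖E‖_op < λ_k, then tr(((1/n)X_{PCA,k}ᵀX_{PCA,k})^† C_xx) ≥ k λ_p / (λ₁ + ‖E‖_op); consequently the PCA-OLS variance V := (σ²/n)·tr(((1/n)X_{PCA,k}ᵀX_{PCA,k})^† C_xx) satisfies V ≥ (σ²/n)·kλ_p/(λ₁ + ‖E‖_op). -/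

import Mathlib

/-!
Weyl's inequality, proved by the min–max argument, puts each empirical eigenvalue `λ̃ᵢ` within
`‖E‖` of `λᵢ`. Hence `λ̃ᵢ ≤ λ₁ + ‖E‖` for all `i`, and `λ̃ᵢ ≥ λ_k - ‖E‖ > 0` for the top `k`.
The pseudoinverse of `∑_{i<k} λ̃ᵢ ũᵢũᵢᵀ` is `∑_{i<k} λ̃ᵢ⁻¹ ũᵢũᵢᵀ`, so the trace equals
`∑_{i<k} ũᵢᵀ C_xx ũᵢ / λ̃ᵢ`, and each term is at least `λ_p / (λ₁ + ‖E‖)`.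
-/

open Matrix
open scoped BigOperators Matrix.Norms.L2Operator

/-- `P` is the Moore–Penrose pseudoinverse of `A`. -/
def IsMoorePenrose {m n : Type*} [Fintype m] [Fintype n]
    (A : Matrix m n ℝ) (P : Matrix n m ℝ) : Prop :=
  A * P * A = A ∧ P * A * P = P ∧ (A * P)ᵀ = A * P ∧ (P * A)ᵀ = P * A

section Spectral

variable {m ι : Type*} [Fintype m]

theorem dotProduct_mulVec_sum_smul_vecMulVec (s : Finset ι) (c : ι → ℝ) (w : ι → m → ℝ)
    (v : m → ℝ) :
    v ⬝ᵥ ((∑ j ∈ s, c j • vecMulVec (w j) (w j)) *ᵥ v) = ∑ j ∈ s, c j * (w j ⬝ᵥ v) ^ 2 := by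
  simp only [sum_mulVec, dotProduct_sum, smul_mulVec, vecMulVec_mulVec, op_smul_eq_smul,
    dotProduct_smul, smul_eq_mul, dotProduct_comm v (w _)]
  exact Finset.sum_congr rfl fun j _ => by ring

theorem sum_sq_dotProduct_eq_dotProduct_self [DecidableEq m] {w : m → m → ℝ}
    (hw : ∀ i j, w i ⬝ᵥ w j = if i = j then 1 else 0) (v : m → ℝ) :
    ∑ j, (w j ⬝ᵥ v) ^ 2 = v ⬝ᵥ v := by
  have hU : of w * (of w)ᵀ = 1 := by
    ext i j
    simpa [mul_apply, one_apply, dotProduct] using hw i j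
  calc ∑ j, (w j ⬝ᵥ v) ^ 2 = (of w *ᵥ v) ⬝ᵥ (of w *ᵥ v) := by
        simp [dotProduct, mulVec, sq]
    _ = v ⬝ᵥ v := by
        rw [dotProduct_mulVec, vecMul_mulVec, mul_eq_one_comm.mp hU, vecMul_one]

theorem mul_dotProduct_self_le_dotProduct_mulVec_sum [DecidableEq m] {w : m → m → ℝ}
    (hw : ∀ i j, w i ⬝ᵥ w j = if i = j then 1 else 0) {c : m → ℝ} {a : ℝ} {v : m → ℝ}
    (hc : ∀ j, w j ⬝ᵥ v ≠ 0 → a ≤ c j) :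
    a * (v ⬝ᵥ v) ≤ v ⬝ᵥ ((∑ j, c j • vecMulVec (w j) (w j)) *ᵥ v) := by
  rw [dotProduct_mulVec_sum_smul_vecMulVec, ← sum_sq_dotProduct_eq_dotProduct_self hw,
    Finset.mul_sum]
  refine Finset.sum_le_sum fun j _ => ?_
  by_cases hj : w j ⬝ᵥ v = 0
  · simp [hj]
  · exact mul_le_mul_of_nonneg_right (hc j hj) (sq_nonneg _)

theorem dotProduct_mulVec_sum_le_mul_dotProduct_self [DecidableEq m] {w : m → m → ℝ}
    (hw : ∀ i j, w i ⬝ᵥ w j = if i = j then 1 else 0) {c : m → ℝ} {b : ℝ} {v : m → ℝ}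
    (hc : ∀ j, w j ⬝ᵥ v ≠ 0 → c j ≤ b) :
    v ⬝ᵥ ((∑ j, c j • vecMulVec (w j) (w j)) *ᵥ v) ≤ b * (v ⬝ᵥ v) := by
  rw [dotProduct_mulVec_sum_smul_vecMulVec, ← sum_sq_dotProduct_eq_dotProduct_self hw,
    Finset.mul_sum]
  refine Finset.sum_le_sum fun j _ => ?_
  by_cases hj : w j ⬝ᵥ v = 0
  · simp [hj]
  · exact mul_le_mul_of_nonneg_right (hc j hj) (sq_nonneg _)

open scoped RealInnerProductSpace in
theorem dotProduct_mulVec_le_l2_opNorm_mul [DecidableEq m] (A : Matrix m m ℝ) (v : m → ℝ) :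
    v ⬝ᵥ (A *ᵥ v) ≤ ‖A‖ * (v ⬝ᵥ v) := by
  set x : EuclideanSpace ℝ m := WithLp.toLp 2 v
  have hx : ‖x‖ ^ 2 = v ⬝ᵥ v := by
    simpa [real_inner_self_eq_norm_sq] using inner_toEuclideanCLM (1 : Matrix m m ℝ) x x
  calc v ⬝ᵥ (A *ᵥ v) = ⟪x, toEuclideanCLM (𝕜 := ℝ) A x⟫ := (inner_toEuclideanCLM A x x).symm
    _ ≤ ‖x‖ * ‖toEuclideanCLM (𝕜 := ℝ) A x‖ := real_inner_le_norm _ _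
    _ ≤ ‖x‖ * (‖A‖ * ‖x‖) := by gcongr; exact (toEuclideanCLM (𝕜 := ℝ) A).le_opNorm x
    _ = ‖A‖ * (v ⬝ᵥ v) := by rw [← hx]; ring

theorem exists_ne_zero_forall_dotProduct_eq_zero {K κ : Type*} [Field K] [Fintype κ]
    (r : κ → m → K) (hcard : Fintype.card κ < Fintype.card m) :
    ∃ v : m → K, v ≠ 0 ∧ ∀ j, r j ⬝ᵥ v = 0 := by
  have hker : LinearMap.ker (of r).mulVecLin ≠ ⊥ :=
    LinearMap.ker_ne_bot_of_finrank_lt (by simpa using hcard)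
  obtain ⟨v, hv, hv0⟩ := Submodule.exists_mem_ne_zero_of_ne_bot hker
  exact ⟨v, hv0, fun j => congrFun (LinearMap.mem_ker.mp hv) j⟩

end Spectral

theorem weyl_le_add_l2_opNorm_sub {p : ℕ} {a b : Fin p → ℝ} (ha : Antitone a) (hb : Antitone b)
    {w z : Fin p → Fin p → ℝ} (hw : ∀ i j, w i ⬝ᵥ w j = if i = j then 1 else 0)
    (hz : ∀ i j, z i ⬝ᵥ z j = if i = j then 1 else 0) (i : Fin p) :
    a i ≤ b i + ‖(∑ j, a j • vecMulVec (w j) (w j)) - ∑ j, b j • vecMulVec (z j) (z j)‖ := by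
  set A := ∑ j, a j • vecMulVec (w j) (w j)
  set B := ∑ j, b j • vecMulVec (z j) (z j)
  -- `v` lies in the span of `w 0, …, w i` and in that of `z i, …, z (p - 1)`
  obtain ⟨v, hv0, hv⟩ := exists_ne_zero_forall_dotProduct_eq_zero
    (fun j : {j // j ≠ i} => if j.1 < i then z j else w j)
    (Fintype.card_subtype_lt (x := i) (by simp))
  have hA : a i * (v ⬝ᵥ v) ≤ v ⬝ᵥ (A *ᵥ v) := by
    refine mul_dotProduct_self_le_dotProduct_mulVec_sum hw fun j hj => ha ?_
    by_contra! hij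
    exact hj (by simpa [hij.not_gt] using hv ⟨j, hij.ne'⟩)
  have hB : v ⬝ᵥ (B *ᵥ v) ≤ b i * (v ⬝ᵥ v) := by
    refine dotProduct_mulVec_sum_le_mul_dotProduct_self hz fun j hj => hb ?_
    by_contra! hij
    exact hj (by simpa [hij] using hv ⟨j, hij.ne⟩)
  have hAB : v ⬝ᵥ ((A - B) *ᵥ v) ≤ ‖A - B‖ * (v ⬝ᵥ v) := dotProduct_mulVec_le_l2_opNorm_mul _ v
  have hvv : 0 < v ⬝ᵥ v := by simpa using dotProduct_self_star_pos_iff.mpr hv0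
  rw [sub_mulVec, dotProduct_sub] at hAB
  nlinarith

theorem IsMoorePenrose.eq {m n : Type*} [Fintype m] [Fintype n] {A : Matrix m n ℝ}
    {P Q : Matrix n m ℝ} (hP : IsMoorePenrose A P) (hQ : IsMoorePenrose A Q) : P = Q := by
  obtain ⟨hP₁, hP₂, hP₃, hP₄⟩ := hP
  obtain ⟨hQ₁, hQ₂, hQ₃, hQ₄⟩ := hQ
  have hAP : A * P = A * Q :=
    calc A * P = (A * P)ᵀ := hP₃.symm
      _ = (A * Q * (A * P))ᵀ := by rw [← Matrix.mul_assoc, hQ₁]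
      _ = A * P * (A * Q) := by rw [transpose_mul, hP₃, hQ₃]
      _ = A * Q := by rw [← Matrix.mul_assoc, hP₁]
  have hPA : P * A = Q * A :=
    calc P * A = (P * A)ᵀ := hP₄.symm
      _ = (P * A * (Q * A))ᵀ := by
        rw [← Matrix.mul_assoc, Matrix.mul_assoc P, Matrix.mul_assoc P, hQ₁]
      _ = Q * A * (P * A) := by rw [transpose_mul, hQ₄, hP₄]
      _ = Q * A := by rw [Matrix.mul_assoc, ← Matrix.mul_assoc A, hP₁]
  calc P = P * A * P := hP₂.symm
    _ = Q * A * Q := by rw [hPA, Matrix.mul_assoc, hAP, ← Matrix.mul_assoc]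
    _ = Q := hQ₂

section PseudoInverse

variable {m ι : Type*} [Fintype m] {w : ι → m → ℝ}

theorem sum_smul_vecMulVec_mul_sum_smul_vecMulVec [DecidableEq ι]
    (hw : ∀ i j, w i ⬝ᵥ w j = if i = j then 1 else 0) (s : Finset ι) (c d : ι → ℝ) :
    (∑ i ∈ s, c i • vecMulVec (w i) (w i)) * ∑ i ∈ s, d i • vecMulVec (w i) (w i)
      = ∑ i ∈ s, (c i * d i) • vecMulVec (w i) (w i) := by
  rw [Finset.sum_mul]
  refine Finset.sum_congr rfl fun i hi => ?_
  rw [Finset.mul_sum, Finset.sum_eq_single_of_mem i hi fun j _ hji => ?_]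
  · simp [smul_mul_smul_comm, vecMulVec_mul_vecMulVec, hw]
  · simp [smul_mul_smul_comm, vecMulVec_mul_vecMulVec, hw, hji.symm]

theorem inv_mul_mul_inv_cancel {G₀ : Type*} [GroupWithZero G₀] (a : G₀) :
    a⁻¹ * a * a⁻¹ = a⁻¹ := by
  simpa using mul_inv_mul_cancel a⁻¹

theorem isMoorePenrose_sum_smul_vecMulVec [DecidableEq ι]
    (hw : ∀ i j, w i ⬝ᵥ w j = if i = j then 1 else 0) (s : Finset ι) (c : ι → ℝ) :
    IsMoorePenrose (∑ i ∈ s, c i • vecMulVec (w i) (w i))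
      (∑ i ∈ s, (c i)⁻¹ • vecMulVec (w i) (w i)) := by
  have hsymm : ∀ d : ι → ℝ, (∑ i ∈ s, d i • vecMulVec (w i) (w i))ᵀ
      = ∑ i ∈ s, d i • vecMulVec (w i) (w i) := by
    simp [transpose_sum]
  simp only [IsMoorePenrose, sum_smul_vecMulVec_mul_sum_smul_vecMulVec hw, hsymm,
    mul_inv_mul_cancel, inv_mul_mul_inv_cancel, and_self]

theorem trace_sum_smul_vecMulVec_mul (s : Finset ι) (c : ι → ℝ) (C : Matrix m m ℝ) :
    trace ((∑ i ∈ s, c i • vecMulVec (w i) (w i)) * C) = ∑ i ∈ s, c i * (w i ⬝ᵥ (C *ᵥ w i)) := by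
  simp only [Finset.sum_mul, trace_sum, smul_mul, trace_smul, vecMulVec_mul, trace_vecMulVec,
    smul_eq_mul, dotProduct_mulVec, dotProduct_comm (w _) (_ ᵥ* C)]

end PseudoInverse

theorem pca_ols_variance_lower_bound
    (n p k : ℕ) (hk : k < min n p)
    (X : Matrix (Fin n) (Fin p) ℝ)
    (Cxx : Matrix (Fin p) (Fin p) ℝ)
    (σ : ℝ)
    -- eigendecomposition of the population covariance, eigenvalues sorted decreasingly
    (lam : Fin p → ℝ) (u : Fin p → Fin p → ℝ)
    (hlam_anti : ∀ i j : Fin p, i ≤ j → lam j ≤ lam i)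
    (hlam_nonneg : ∀ j, 0 ≤ lam j)
    (hu_orth : ∀ i j, u i ⬝ᵥ u j = if i = j then (1 : ℝ) else 0)
    (hCxx : Cxx = ∑ j, lam j • vecMulVec (u j) (u j))
    -- eigendecomposition of the empirical covariance (1/n) XᵀX
    (lamt : Fin p → ℝ) (ut : Fin p → Fin p → ℝ)
    (hlamt_anti : ∀ i j : Fin p, i ≤ j → lamt j ≤ lamt i)
    (hut_orth : ∀ i j, ut i ⬝ᵥ ut j = if i = j then (1 : ℝ) else 0)
    (hemp : (1 / (n : ℝ)) • (Xᵀ * X) = ∑ j, lamt j • vecMulVec (ut j) (ut j))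
    -- the rank-k truncated SVD of X and the pseudoinverse of (1/n) X_{PCA,k}ᵀ X_{PCA,k}
    (Xk : Matrix (Fin n) (Fin p) ℝ)
    (hXk : (1 / (n : ℝ)) • (Xkᵀ * Xk)
      = ∑ i ∈ Finset.univ.filter (fun i : Fin p => (i : ℕ) < k), lamt i • vecMulVec (ut i) (ut i))
    (Bdag : Matrix (Fin p) (Fin p) ℝ)
    (hBdag : IsMoorePenrose ((1 / (n : ℝ)) • (Xkᵀ * Xk)) Bdag)
    -- the perturbation and the spectral condition
    (E : Matrix (Fin p) (Fin p) ℝ)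
    (hE : E = Cxx - (1 / (n : ℝ)) • (Xᵀ * X))
    (hEk : ‖E‖ < lam ⟨k - 1, by omega⟩) :
    (k : ℝ) * lam ⟨p - 1, by omega⟩ / (lam ⟨0, by omega⟩ + ‖E‖)
        ≤ Matrix.trace (Bdag * Cxx) ∧
      (σ ^ 2 / (n : ℝ)) * ((k : ℝ) * lam ⟨p - 1, by omega⟩ / (lam ⟨0, by omega⟩ + ‖E‖))
        ≤ (σ ^ 2 / (n : ℝ)) * Matrix.trace (Bdag * Cxx) := by
  set s := Finset.univ.filter (fun i : Fin p => (i : ℕ) < k)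
  rw [hCxx, hemp] at hE
  have hlamt_pos : ∀ i ∈ s, 0 < lamt i := fun i hi => by
    have := hlam_anti i ⟨k - 1, by omega⟩ (show (i : ℕ) ≤ k - 1 by simp [s] at hi; omega)
    linarith [weyl_le_add_l2_opNorm_sub hlam_anti hlamt_anti hu_orth hut_orth i, hE ▸ hEk]
  have hlamt_le : ∀ i, lamt i ≤ lam ⟨0, by omega⟩ + ‖E‖ := fun i => by
    have := weyl_le_add_l2_opNorm_sub hlamt_anti hlam_anti hut_orth hu_orth ⟨0, by omega⟩
    rw [norm_sub_rev, ← hE] at this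
    linarith [hlamt_anti ⟨0, by omega⟩ i (show 0 ≤ (i : ℕ) from Nat.zero_le _)]
  have hlam_le : ∀ i, lam ⟨p - 1, by omega⟩ ≤ ut i ⬝ᵥ (Cxx *ᵥ ut i) := fun i => by
    simpa [hut_orth, hCxx] using mul_dotProduct_self_le_dotProduct_mulVec_sum hu_orth
      (v := ut i) fun j _ => hlam_anti j _ (show (j : ℕ) ≤ p - 1 by omega)
  have hBdag_eq : Bdag = ∑ i ∈ s, (lamt i)⁻¹ • vecMulVec (ut i) (ut i) :=
    hBdag.eq (hXk ▸ isMoorePenrose_sum_smul_vecMulVec hut_orth s lamt)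
  have hbound : (k : ℝ) * lam ⟨p - 1, by omega⟩ / (lam ⟨0, by omega⟩ + ‖E‖)
      ≤ Matrix.trace (Bdag * Cxx) := by
    rw [hBdag_eq, trace_sum_smul_vecMulVec_mul]
    calc (k : ℝ) * lam ⟨p - 1, by omega⟩ / (lam ⟨0, by omega⟩ + ‖E‖)
        = ∑ i ∈ s, lam ⟨p - 1, by omega⟩ / (lam ⟨0, by omega⟩ + ‖E‖) := by
          simp [s, Fin.card_filter_val_lt, show k ≤ p by omega, mul_div_assoc]
      _ ≤ ∑ i ∈ s, (lamt i)⁻¹ * (ut i ⬝ᵥ (Cxx *ᵥ ut i)) := Finset.sum_le_sum fun i hi => by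
          rw [← div_eq_inv_mul]
          calc _ ≤ lam ⟨p - 1, by omega⟩ / lamt i :=
                div_le_div_of_nonneg_left (hlam_nonneg _) (hlamt_pos i hi) (hlamt_le i)
            _ ≤ _ := div_le_div_of_nonneg_right (hlam_le i) (hlamt_pos i hi).le
  exact ⟨hbound, mul_le_mul_of_nonneg_left hbound (by positivity)⟩
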